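/- arXiv:0712.3112 — 2 statements merged into one kernel-verified Lean document; each statement's English description precedes it below -/
import Mathlib

section
/- Let G = (V, E) be a finite multigraph and x ≥ y ≥ 0 integers. Then the bivariate chromatic polynomial of Dohmen, Pönitz and Tittman is a substitution instance of the edge elimination polynomial: P(G, x, y) = ξ(G, x, −1, x − y), where the right-hand side is the evaluation of the polynomial ξ(G, x, y, z) at the point (x, −1, x − y). -/
/-- A finite multigraph: finite vertex and edge types, each edge assigned an
unordered pair of (not necessarily distinct) endpoints. -/
structure Multigraph where
  V : Type
  E : Type
  [fintypeV : Fintype V]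
  [decEqV : DecidableEq V]
  [fintypeE : Fintype E]
  [decEqE : DecidableEq E]
  ends : E → Sym2 V

namespace Multigraph

attribute [instance] fintypeV decEqV fintypeE decEqE

/-- The empty multigraph. -/
def emptyGraph : Multigraph where
  V := Empty
  E := Empty
  ends := fun e => e.elim

/-- The one-vertex multigraph `E₁` with no edges. -/
def singleVertex : Multigraph where
  V := Unit
  E := Empty
  ends := fun e => e.elim

/-- Disjoint union of multigraphs. -/
def disjUnion (G₁ G₂ : Multigraph) : Multigraph where
  V := G₁.V ⊕ G₂.V
  E := G₁.E ⊕ G₂.E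
  ends := Sum.elim (fun e => (G₁.ends e).map Sum.inl) (fun e => (G₂.ends e).map Sum.inr)

/-- Deletion of an edge. -/
def deleteEdge (G : Multigraph) (e : G.E) : Multigraph where
  V := G.V
  E := {e' : G.E // e' ≠ e}
  ends := fun e' => G.ends e'.val

/-- Contraction of an edge: its endpoints are identified
(replaced by a single new vertex) and the edge is removed. -/
def contractEdge (G : Multigraph) (e : G.E) : Multigraph where
  V := {v : G.V // v ∉ G.ends e} ⊕ Unit
  E := {e' : G.E // e' ≠ e}
  ends := fun e' => (G.ends e'.val).map
    (fun v => if h : v ∈ G.ends e then Sum.inr () else Sum.inl ⟨v, h⟩)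

/-- Extraction of an edge: both endpoints are deleted together with
all incident edges. -/
def extractEdge (G : Multigraph) (e : G.E) : Multigraph where
  V := {v : G.V // v ∉ G.ends e}
  E := {e' : G.E // ∀ v : G.V, v ∈ G.ends e' → v ∉ G.ends e}
  ends := fun e' => (G.ends e'.val).attachWith (fun v hv => e'.prop v hv)

/-- Deletion of a vertex (together with all incident edges). -/
def deleteVertex (G : Multigraph) (v : G.V) : Multigraph where
  V := {w : G.V // w ≠ v}
  E := {e : G.E // v ∉ G.ends e}
  ends := fun e => (G.ends e.val).attachWith
    (fun w hw => fun hwv => e.prop (hwv ▸ hw))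

/-- Number of connected components of the spanning subgraph `(V, S)`. -/
noncomputable def k (G : Multigraph) (S : Finset G.E) : ℕ :=
  Nat.card (Quot (fun u v : G.V => ∃ e ∈ S, G.ends e = s(u, v)))

/-- Number of connected components of `(V(S), S)`, the graph on the vertices
covered by `S`. -/
noncomputable def kcov (G : Multigraph) (S : Finset G.E) : ℕ :=
  Nat.card (Quot (fun u v : {w : G.V // ∃ e ∈ S, w ∈ G.ends e} =>
    ∃ e ∈ S, G.ends e = s(u.val, v.val)))

/-- `V(A)` and `V(B)` are disjoint. -/
def CovDisjoint (G : Multigraph) (A B : Finset G.E) : Prop :=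
  ∀ v : G.V, (∃ e ∈ A, v ∈ G.ends e) → ¬ (∃ e ∈ B, v ∈ G.ends e)

instance (G : Multigraph) (A B : Finset G.E) : Decidable (G.CovDisjoint A B) := by
  unfold CovDisjoint; infer_instance

/-- The edge elimination polynomial (evaluated at `x y z` in a commutative ring):
`ξ(G,x,y,z) = Σ_{(A ⊔ B) ⊆ E} x^{k(A∪B)-k_cov(B)} y^{|A|+|B|-k_cov(B)} z^{k_cov(B)}`. -/
noncomputable def xi {R : Type*} [CommRing R] (G : Multigraph) (x y z : R) : R :=
  ∑ A : Finset G.E, ∑ B : Finset G.E,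
    if G.CovDisjoint A B then
      x ^ (G.k (A ∪ B) - G.kcov B) * y ^ (A.card + B.card - G.kcov B) * z ^ G.kcov B
    else 0

/-- Isomorphism of multigraphs. -/
structure Iso (G H : Multigraph) where
  vEquiv : G.V ≃ H.V
  eEquiv : G.E ≃ H.E
  ends_map : ∀ e : G.E, H.ends (eEquiv e) = (G.ends e).map vEquiv

end Multigraph

/-- `φ : V → Fin x` is a generalized proper coloring with the first `y` colors proper:
for every edge with endpoints `u, v` it is not the case that both endpoints get proper
colors and the same color.  (For a loop this forces its vertex to get a non-proper
color, and multiple edges impose no extra condition.) -/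
def Multigraph.IsDPTColoring (G : Multigraph) {x : ℕ} (y : ℕ) (φ : G.V → Fin x) : Prop :=
  ∀ (e : G.E) (u v : G.V), G.ends e = s(u, v) →
    ¬ ((φ u).val < y ∧ (φ v).val < y ∧ φ u = φ v)

/-- The bivariate (Dohmen–Pönitz–Tittmann) chromatic polynomial: the number of
generalized proper colorings with `x` colors, `y` of them proper. -/
noncomputable def Multigraph.chromP (G : Multigraph) (x y : ℕ) : ℕ :=
  Nat.card {φ : G.V → Fin x // G.IsDPTColoring y φ}

namespace Multigraph

variable (G : Multigraph)

/-- The vertices covered by `S`. -/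
abbrev VS (S : Finset G.E) := {w : G.V // ∃ e ∈ S, w ∈ G.ends e}

/-- The relation on covered vertices. -/
def relC (S : Finset G.E) (u v : G.VS S) : Prop := ∃ e ∈ S, G.ends e = s(u.val, v.val)

/-- The components of `(V(S), S)`. -/
abbrev CC (S : Finset G.E) := Quot (G.relC S)

/-- The relation on all vertices. -/
def relV (S : Finset G.E) (u v : G.V) : Prop := ∃ e ∈ S, G.ends e = s(u, v)

lemma kcov_def (S : Finset G.E) : G.kcov S = Nat.card (G.CC S) := rfl

lemma k_def (S : Finset G.E) : G.k S = Nat.card (Quot (G.relV S)) := rfl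

lemma mk_eq_mk_of_mem {S : Finset G.E} {e : G.E} (he : e ∈ S) {a v : G.V}
    (ha : a ∈ G.ends e) (hv : v ∈ G.ends e) {h1 : ∃ e' ∈ S, a ∈ G.ends e'}
    {h2 : ∃ e' ∈ S, v ∈ G.ends e'} :
    Quot.mk (G.relC S) ⟨a, h1⟩ = Quot.mk (G.relC S) ⟨v, h2⟩ := by
  obtain ⟨w, hw⟩ := Sym2.mem_iff_exists.mp hv
  rw [hw, Sym2.mem_iff] at ha
  rcases ha with ha | ha
  · exact congrArg _ (Subtype.ext ha)
  · refine Quot.sound ⟨e, he, ?_⟩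
    show G.ends e = s(a, v)
    rw [hw, ha, Sym2.eq_swap]

/-- The component of an edge of `S`. -/
noncomputable def comp {S : Finset G.E} (e : G.E) (he : e ∈ S) : G.CC S :=
  Quot.mk _ ⟨(G.ends e).out.1, ⟨e, he, Sym2.out_fst_mem _⟩⟩

lemma comp_eq {S : Finset G.E} {e : G.E} (he : e ∈ S) {v : G.V} (hv : v ∈ G.ends e)
    (h : ∃ e' ∈ S, v ∈ G.ends e') : G.comp e he = Quot.mk _ ⟨v, h⟩ :=
  G.mk_eq_mk_of_mem he (Sym2.out_fst_mem _) hv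

lemma comp_surj {S : Finset G.E} (c : G.CC S) : ∃ e : {e // e ∈ S}, G.comp e.1 e.2 = c := by
  induction c using Quot.ind with
  | _ v =>
    obtain ⟨e, he, hv⟩ := v.2
    exact ⟨⟨e, he⟩, G.comp_eq he hv v.2⟩

lemma kcov_le_card (S : Finset G.E) : G.kcov S ≤ S.card := by
  have hs : Function.Surjective (fun e : {e // e ∈ S} => G.comp e.1 e.2) := fun c => G.comp_surj c
  calc G.kcov S ≤ Nat.card {e // e ∈ S} := Nat.card_le_card_of_surjective _ hs
    _ = S.card := by simp [Nat.card_eq_fintype_card]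

/-- Components of the spanning subgraph are components of the covered graph plus
isolated uncovered vertices. -/
noncomputable def compSumEquiv (S : Finset G.E) :
    Quot (G.relV S) ≃ (G.CC S) ⊕ {v : G.V // ¬ ∃ e ∈ S, v ∈ G.ends e} where
  toFun := Quot.lift
    (fun v => if h : ∃ e ∈ S, v ∈ G.ends e then Sum.inl (Quot.mk _ ⟨v, h⟩) else Sum.inr ⟨v, h⟩)
    (by
      rintro u v ⟨e, he, hend⟩
      have hu : ∃ e ∈ S, u ∈ G.ends e := ⟨e, he, by rw [hend]; exact Sym2.mem_mk_left _ _⟩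
      have hv : ∃ e ∈ S, v ∈ G.ends e := ⟨e, he, by rw [hend]; exact Sym2.mem_mk_right _ _⟩
      rw [dif_pos hu, dif_pos hv]
      exact congrArg _ (Quot.sound ⟨e, he, hend⟩))
  invFun := Sum.elim
    (Quot.lift (fun w => Quot.mk _ w.val) (fun u v huv => Quot.sound huv))
    (fun w => Quot.mk _ w.val)
  left_inv := by
    apply Quot.ind
    intro v
    by_cases h : ∃ e ∈ S, v ∈ G.ends e
    · show Sum.elim _ _ (if h' : _ then _ else _) = _
      rw [dif_pos h]
      rfl
    · show Sum.elim _ _ (if h' : _ then _ else _) = _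
      rw [dif_neg h]
      rfl
  right_inv := by
    rintro (c | w)
    · induction c using Quot.ind with
      | _ w =>
        show (if h' : _ then _ else _) = _
        rw [dif_pos w.2]
    · show (if h' : _ then _ else _) = _
      rw [dif_neg w.2]

lemma k_eq (S : Finset G.E) :
    G.k S = G.kcov S + Nat.card {v : G.V // ¬ ∃ e ∈ S, v ∈ G.ends e} := by
  rw [k_def, Nat.card_congr (G.compSumEquiv S), Nat.card_sum, kcov_def]

lemma kcov_le_k (S : Finset G.E) : G.kcov S ≤ G.k S := by
  rw [G.k_eq S]; omega

end Multigraph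
namespace Multigraph

variable (G : Multigraph)

/-- Edge `e` is "bad" for `φ`: both endpoints get the same proper color. -/
def Bad (y : ℕ) {x : ℕ} (e : G.E) (φ : G.V → Fin x) : Prop :=
  ∃ u v : G.V, G.ends e = s(u, v) ∧ (φ u).val < y ∧ (φ v).val < y ∧ φ u = φ v

instance (y : ℕ) {x : ℕ} (e : G.E) (φ : G.V → Fin x) : Decidable (G.Bad y e φ) := by
  unfold Bad; infer_instance

lemma isDPT_iff {x y : ℕ} (φ : G.V → Fin x) :
    G.IsDPTColoring y φ ↔ ∀ e : G.E, ¬ G.Bad y e φ := by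
  constructor
  · rintro h e ⟨u, v, h1, h2, h3, h4⟩
    exact h e u v h1 ⟨h2, h3, h4⟩
  · intro h e u v h1 h2
    exact h e ⟨u, v, h1, h2⟩

lemma card_bad (S : Finset G.E) {x y : ℕ} (hxy : y ≤ x) :
    Nat.card {φ : G.V → Fin x // ∀ e ∈ S, G.Bad y e φ} =
      y ^ G.kcov S * x ^ Nat.card {v : G.V // ¬ ∃ e ∈ S, v ∈ G.ends e} := by
  classical
  have hlt : ∀ (φ : G.V → Fin x), (∀ e ∈ S, G.Bad y e φ) → ∀ (v : G.V),
      (∃ e ∈ S, v ∈ G.ends e) → (φ v).val < y := by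
    rintro φ h v ⟨e, he, hv⟩
    obtain ⟨u', v', hend, h1, h2, _⟩ := h e he
    rw [hend, Sym2.mem_iff] at hv
    rcases hv with rfl | rfl
    · exact h1
    · exact h2
  have hresp : ∀ (φ : G.V → Fin x), (∀ e ∈ S, G.Bad y e φ) → ∀ u v : G.VS S,
      G.relC S u v → φ u.val = φ v.val := by
    rintro φ h u v ⟨e, he, hend⟩
    obtain ⟨u', v', hend', _, _, heq⟩ := h e he
    rw [hend'] at hend
    rcases Sym2.eq_iff.mp hend with ⟨h1, h2⟩ | ⟨h1, h2⟩
    · rw [← h1, ← h2]; exact heq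
    · rw [← h1, ← h2]; exact heq.symm
  have eqv : {φ : G.V → Fin x // ∀ e ∈ S, G.Bad y e φ} ≃
      ((G.CC S → Fin y) × ({v : G.V // ¬ ∃ e ∈ S, v ∈ G.ends e} → Fin x)) := by
    refine
    { toFun := fun φ =>
        (Quot.lift (fun v : G.VS S => (⟨(φ.1 v.val).val, hlt φ.1 φ.2 v.val v.2⟩ : Fin y))
          (fun u v huv => Fin.mk_eq_mk.mpr (congrArg Fin.val (hresp φ.1 φ.2 u v huv))),
          fun v => φ.1 v.val)
      invFun := fun p =>
        ⟨fun v => if h : ∃ e ∈ S, v ∈ G.ends e then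
            ⟨(p.1 (Quot.mk _ ⟨v, h⟩)).val, lt_of_lt_of_le (p.1 _).isLt hxy⟩
          else p.2 ⟨v, h⟩, ?_⟩
      left_inv := ?_
      right_inv := ?_ }
    · intro e he
      have ha : (G.ends e).out.1 ∈ G.ends e := Sym2.out_fst_mem _
      obtain ⟨b, hb⟩ := Sym2.mem_iff_exists.mp ha
      set a := (G.ends e).out.1 with hadef
      have hmb : b ∈ G.ends e := by rw [hb]; exact Sym2.mem_mk_right _ _
      have hca : ∃ e' ∈ S, a ∈ G.ends e' := ⟨e, he, ha⟩
      have hcb : ∃ e' ∈ S, b ∈ G.ends e' := ⟨e, he, hmb⟩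
      have hq : Quot.mk (G.relC S) ⟨a, hca⟩ = Quot.mk (G.relC S) ⟨b, hcb⟩ :=
        Quot.sound ⟨e, he, hb⟩
      refine ⟨a, b, hb, ?_⟩
      dsimp only
      rw [dif_pos hca, dif_pos hcb, hq]
      exact ⟨(p.1 _).isLt, (p.1 _).isLt, rfl⟩
    · rintro ⟨φ, h⟩
      apply Subtype.ext
      funext v
      dsimp only
      by_cases hc : ∃ e ∈ S, v ∈ G.ends e
      · rw [dif_pos hc]
      · rw [dif_neg hc]
    · rintro ⟨c, ψ⟩
      dsimp only
      refine Prod.ext ?_ ?_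
      · dsimp only
        funext q
        induction q using Quot.ind with
        | _ w =>
          apply Fin.ext
          show (if h : _ then _ else _ : Fin x).val = _
          rw [dif_pos w.2]
      · dsimp only
        funext v
        show (if h : _ then _ else _ : Fin x) = _
        rw [dif_neg v.2]
  rw [Nat.card_congr eqv, Nat.card_prod, Nat.card_fun, Nat.card_fun, kcov_def]
  simp [Nat.card_eq_fintype_card]

end Multigraph
namespace Multigraph

lemma chromP_eq_sum (G : Multigraph) (x y : ℕ) (hxy : y ≤ x) :
    (G.chromP x y : ℤ) =
      ∑ S : Finset G.E, (-1 : ℤ) ^ S.card * x ^ (G.k S - G.kcov S) * y ^ G.kcov S := by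
  classical
  have h1 : (G.chromP x y : ℤ) =
      ∑ φ : G.V → Fin x, (if G.IsDPTColoring y φ then (1 : ℤ) else 0) := by
    rw [Finset.sum_boole, chromP, Nat.card_eq_fintype_card, Fintype.card_subtype]
  rw [h1]
  have h2 : ∀ φ : G.V → Fin x, (if G.IsDPTColoring y φ then (1 : ℤ) else 0) =
      ∑ T : Finset G.E, (-1 : ℤ) ^ T.card * (if ∀ e ∈ T, G.Bad y e φ then 1 else 0) := by
    intro φ
    have step1 : (if G.IsDPTColoring y φ then (1 : ℤ) else 0) =
        ∏ e : G.E, ((if G.Bad y e φ then (-1 : ℤ) else 0) + 1) := by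
      by_cases h : G.IsDPTColoring y φ
      · rw [if_pos h]
        rw [G.isDPT_iff] at h
        exact (Finset.prod_eq_one (fun e _ => by rw [if_neg (h e), zero_add])).symm
      · rw [if_neg h]
        rw [G.isDPT_iff] at h
        push_neg at h
        obtain ⟨e, he⟩ := h
        refine (Finset.prod_eq_zero (Finset.mem_univ e) ?_).symm
        rw [if_pos he]
        ring
    rw [step1, Finset.prod_add]
    rw [Finset.powerset_univ]
    refine Finset.sum_congr rfl (fun T _ => ?_)
    rw [Finset.prod_const_one, mul_one]
    by_cases h : ∀ e ∈ T, G.Bad y e φ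
    · rw [if_pos h, mul_one]
      rw [Finset.prod_congr rfl (fun e he => if_pos (h e he)), Finset.prod_const]
    · rw [if_neg h, mul_zero]
      push_neg at h
      obtain ⟨e, heT, he⟩ := h
      exact Finset.prod_eq_zero heT (if_neg he)
  rw [Finset.sum_congr rfl (fun φ _ => h2 φ), Finset.sum_comm]
  refine Finset.sum_congr rfl (fun T _ => ?_)
  rw [← Finset.mul_sum]
  have h3 : ∑ φ : G.V → Fin x, (if ∀ e ∈ T, G.Bad y e φ then (1 : ℤ) else 0) =
      (y : ℤ) ^ G.kcov T * x ^ (G.k T - G.kcov T) := by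
    rw [Finset.sum_boole]
    have := G.card_bad T hxy
    rw [Nat.card_eq_fintype_card, Fintype.card_subtype] at this
    have hu : Nat.card {v : G.V // ¬ ∃ e ∈ T, v ∈ G.ends e} = G.k T - G.kcov T := by
      have := G.k_eq T; omega
    rw [this, hu]
    push_cast
    ring
  rw [h3]
  ring

end Multigraph
namespace Multigraph

variable (G : Multigraph)

lemma covDisjoint_disjoint {A B : Finset G.E} (h : G.CovDisjoint A B) : Disjoint A B := by
  rw [Finset.disjoint_left]
  intro e heA heB
  exact h (G.ends e).out.1 ⟨e, heA, Sym2.out_fst_mem _⟩ ⟨e, heB, Sym2.out_fst_mem _⟩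

lemma covDisjoint_mono {A A' B : Finset G.E} (hA : A' ⊆ A) (h : G.CovDisjoint A B) :
    G.CovDisjoint A' B := by
  rintro v ⟨e, he, hv⟩ hB
  exact h v ⟨e, hA he, hv⟩ hB

/-- If `B` is a "component-closed" subset of `S`, vertices of `V(B)` connected in
`(V(S),S)` are connected in `(V(B),B)`. -/
lemma eqvGen_restrict {S B : Finset G.E}
    (hcl : ∀ e ∈ S, ∀ v, v ∈ G.ends e → (∃ e' ∈ B, v ∈ G.ends e') → e ∈ B)
    {a b : G.VS S} (h : Relation.EqvGen (G.relC S) a b) :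
    ((∃ e ∈ B, a.val ∈ G.ends e) ↔ (∃ e ∈ B, b.val ∈ G.ends e)) ∧
    ∀ (ha : ∃ e ∈ B, a.val ∈ G.ends e) (hb : ∃ e ∈ B, b.val ∈ G.ends e),
      Quot.mk (G.relC B) ⟨a.val, ha⟩ = Quot.mk (G.relC B) ⟨b.val, hb⟩ := by
  induction h with
  | rel a b hab =>
    obtain ⟨e, heS, hend⟩ := hab
    have hma : a.val ∈ G.ends e := by rw [hend]; exact Sym2.mem_mk_left _ _
    have hmb : b.val ∈ G.ends e := by rw [hend]; exact Sym2.mem_mk_right _ _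
    constructor
    · constructor
      · intro hB; exact ⟨e, hcl e heS a.val hma hB, hmb⟩
      · intro hB; exact ⟨e, hcl e heS b.val hmb hB, hma⟩
    · intro ha hb
      exact Quot.sound ⟨e, hcl e heS a.val hma ha, hend⟩
  | refl a => exact ⟨Iff.rfl, fun _ _ => rfl⟩
  | symm a b _ ih => exact ⟨ih.1.symm, fun ha hb => (ih.2 hb ha).symm⟩
  | trans a b c _ _ ih1 ih2 =>
    refine ⟨ih1.1.trans ih2.1, fun ha hc => ?_⟩
    have hb := ih1.1.mp ha
    exact (ih1.2 ha hb).trans (ih2.2 hb hc)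

end Multigraph
lemma neg_one_pow_sub_int {m k : ℕ} (h : k ≤ m) :
    ((-1 : ℤ)) ^ (m - k) = (-1) ^ m * (-1) ^ k := by
  have h2 : ((-1 : ℤ)) ^ k * (-1) ^ k = 1 := by
    rw [← pow_add]; exact Even.neg_one_pow ⟨k, rfl⟩
  have h3 : ((-1 : ℤ)) ^ (m - k) * (-1) ^ k = (-1) ^ m := by
    rw [← pow_add]; congr 1; omega
  calc ((-1 : ℤ)) ^ (m - k) = ((-1 : ℤ)) ^ (m - k) * ((-1) ^ k * (-1) ^ k) := by
        rw [h2, mul_one]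
    _ = ((-1 : ℤ)) ^ (m - k) * (-1) ^ k * (-1) ^ k := (mul_assoc _ _ _).symm
    _ = (-1) ^ m * (-1) ^ k := by rw [h3]

namespace Multigraph

lemma inner_sum (G : Multigraph) (S : Finset G.E) (x y : ℕ) (_hxy : y ≤ x) :
    ∑ B : Finset G.E, (if B ⊆ S ∧ G.CovDisjoint (S \ B) B then
        (x : ℤ) ^ (G.k S - G.kcov B) * (-1) ^ (S.card - G.kcov B) * ((x : ℤ) - y) ^ G.kcov B
      else 0)
    = (-1 : ℤ) ^ S.card * x ^ (G.k S - G.kcov S) * y ^ G.kcov S := by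
  classical
  haveI : Fintype (G.CC S) := Fintype.ofFinite _
  have hcl : ∀ B : Finset G.E, B ⊆ S → G.CovDisjoint (S \ B) B →
      ∀ e ∈ S, ∀ v, v ∈ G.ends e → (∃ e' ∈ B, v ∈ G.ends e') → e ∈ B := by
    intro B hBS hcd e heS v hv hB
    by_contra he
    exact hcd v ⟨e, Finset.mem_sdiff.mpr ⟨heS, he⟩, hv⟩ hB
  set TofB : Finset G.E → Finset (G.CC S) :=
    fun B => Finset.univ.filter (fun c => ∃ e : {e // e ∈ S}, e.1 ∈ B ∧ G.comp e.1 e.2 = c)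
    with hTofB
  set BofT : Finset (G.CC S) → Finset G.E :=
    fun T => Finset.univ.filter (fun e => ∃ h : e ∈ S, G.comp e h ∈ T) with hBofT
  -- kcov B = |TofB B| for component-closed B
  have hkcov : ∀ B : Finset G.E, B ⊆ S → G.CovDisjoint (S \ B) B →
      G.kcov B = (TofB B).card := by
    intro B hBS hcd
    have hcov : ∀ v : G.VS B, ∃ e ∈ S, v.val ∈ G.ends e := by
      rintro ⟨v, e, he, hv⟩; exact ⟨e, hBS he, hv⟩
    have hmem : ∀ v : G.VS B, Quot.mk (G.relC S) ⟨v.val, hcov v⟩ ∈ TofB B := by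
      intro v
      obtain ⟨e, he, hv⟩ := v.2
      exact Finset.mem_filter.mpr ⟨Finset.mem_univ _,
        ⟨e, hBS he⟩, he, G.comp_eq (hBS he) hv (hcov v)⟩
    set f : G.CC B → {c : G.CC S // c ∈ TofB B} :=
      Quot.lift
        (fun v : G.VS B => (⟨Quot.mk (G.relC S) ⟨v.val, hcov v⟩, hmem v⟩ : {c // c ∈ TofB B}))
        (by rintro u v ⟨e, he, hend⟩
            exact Subtype.ext (Quot.sound ⟨e, hBS he, hend⟩)) with hfdef
    have hbij : Function.Bijective f := by
      constructor
      · intro a b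
        induction a using Quot.ind with
        | _ u =>
          induction b using Quot.ind with
          | _ v =>
            intro hab
            rw [hfdef] at hab
            have h' : Quot.mk (G.relC S) ⟨u.val, hcov u⟩ = Quot.mk (G.relC S) ⟨v.val, hcov v⟩ :=
              congrArg Subtype.val hab
            rw [Quot.eq] at h'
            exact (G.eqvGen_restrict (hcl B hBS hcd) h').2 u.2 v.2
      · rintro ⟨c, hc⟩
        obtain ⟨-, e, heB, hce⟩ := Finset.mem_filter.mp hc
        refine ⟨Quot.mk _ ⟨(G.ends e.1).out.1, ⟨e.1, heB, Sym2.out_fst_mem _⟩⟩, ?_⟩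
        apply Subtype.ext
        rw [hfdef]
        show Quot.mk (G.relC S) _ = c
        rw [← hce]
        rfl
    rw [kcov_def, Nat.card_eq_of_bijective f hbij, Nat.card_eq_fintype_card, Fintype.card_coe]
  -- reindex the sum over B by T = TofB B
  rw [← Finset.sum_filter]
  rw [Finset.sum_nbij' (i := fun B => TofB B) (j := fun T => BofT T)
    (t := Finset.univ)
    (g := fun T : Finset (G.CC S) =>
      (x : ℤ) ^ (G.k S - T.card) * (-1) ^ (S.card - T.card) * ((x : ℤ) - y) ^ T.card)
    (fun B _ => Finset.mem_univ _)
    (fun T _ => by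
      -- BofT T lands in the filtered set
      refine Finset.mem_filter.mpr ⟨Finset.mem_univ _, ?_, ?_⟩
      · intro e he
        exact (Finset.mem_filter.mp he).2.1
      · rintro v ⟨e, he, hv⟩ ⟨e', he', hv'⟩
        rw [Finset.mem_sdiff] at he
        obtain ⟨heS, henB⟩ := he
        obtain ⟨-, h', hT⟩ := Finset.mem_filter.mp he'
        have hcovv : ∃ e'' ∈ S, v ∈ G.ends e'' := ⟨e, heS, hv⟩
        have hq : G.comp e heS = G.comp e' h' :=
          (G.comp_eq heS hv hcovv).trans (G.comp_eq h' hv' hcovv).symm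
        exact henB (Finset.mem_filter.mpr ⟨Finset.mem_univ _, heS, hq ▸ hT⟩))
    (fun B hB => by
      -- BofT (TofB B) = B
      obtain ⟨-, hBS, hcd⟩ := Finset.mem_filter.mp hB
      ext e
      constructor
      · intro he
        obtain ⟨-, heS, hT⟩ := Finset.mem_filter.mp he
        obtain ⟨-, e', he'B, hce⟩ := Finset.mem_filter.mp hT
        have hq : Quot.mk (G.relC S) ⟨(G.ends e'.1).out.1, ⟨e'.1, e'.2, Sym2.out_fst_mem _⟩⟩ =
            Quot.mk (G.relC S) ⟨(G.ends e).out.1, ⟨e, heS, Sym2.out_fst_mem _⟩⟩ := hce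
        rw [Quot.eq] at hq
        have hstep := (G.eqvGen_restrict (hcl B hBS hcd) hq).1.mp
          ⟨e'.1, he'B, Sym2.out_fst_mem _⟩
        exact hcl B hBS hcd e heS _ (Sym2.out_fst_mem _) hstep
      · intro heB
        have heS : e ∈ S := hBS heB
        refine Finset.mem_filter.mpr ⟨Finset.mem_univ _, heS,
          Finset.mem_filter.mpr ⟨Finset.mem_univ _, ⟨e, heS⟩, heB, rfl⟩⟩)
    (fun T _ => by
      -- TofB (BofT T) = T
      ext c
      constructor
      · intro hc
        obtain ⟨-, e, heBT, hce⟩ := Finset.mem_filter.mp hc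
        obtain ⟨-, h', hT⟩ := Finset.mem_filter.mp heBT
        exact hce ▸ hT
      · intro hc
        obtain ⟨e, hce⟩ := G.comp_surj c
        refine Finset.mem_filter.mpr ⟨Finset.mem_univ _, e, ?_, hce⟩
        exact Finset.mem_filter.mpr ⟨Finset.mem_univ _, e.2, by rw [hce]; exact hc⟩)
    (fun B hB => by
      obtain ⟨-, hBS, hcd⟩ := Finset.mem_filter.mp hB
      rw [hkcov B hBS hcd])]
  -- now evaluate the sum over all T : Finset (G.CC S)
  have hcS : G.kcov S = Fintype.card (G.CC S) := by
    rw [kcov_def, Nat.card_eq_fintype_card]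
  have hkk : G.kcov S ≤ G.k S := G.kcov_le_k S
  have hkS : G.kcov S ≤ S.card := G.kcov_le_card S
  have hterm : ∀ T : Finset (G.CC S),
      (x : ℤ) ^ (G.k S - T.card) * (-1) ^ (S.card - T.card) * ((x : ℤ) - y) ^ T.card =
      ((-1 : ℤ) ^ S.card * (x : ℤ) ^ (G.k S - G.kcov S)) *
        ((x : ℤ) ^ (G.kcov S - T.card) * ((y : ℤ) - x) ^ T.card) := by
    intro T
    have hT : T.card ≤ G.kcov S := by
      rw [hcS, ← Finset.card_univ]; exact Finset.card_le_univ T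
    have hx : (x : ℤ) ^ (G.k S - T.card) =
        (x : ℤ) ^ (G.k S - G.kcov S) * (x : ℤ) ^ (G.kcov S - T.card) := by
      rw [← pow_add]; congr 1; omega
    have hs : ((-1 : ℤ)) ^ (S.card - T.card) = (-1) ^ S.card * (-1) ^ T.card :=
      neg_one_pow_sub_int (hT.trans hkS)
    have hneg : ((-1 : ℤ)) ^ T.card * ((x : ℤ) - y) ^ T.card = ((y : ℤ) - x) ^ T.card := by
      rw [← mul_pow]; congr 1; ring
    rw [hx, hs]
    calc (x : ℤ) ^ (G.k S - G.kcov S) * (x : ℤ) ^ (G.kcov S - T.card) *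
          ((-1) ^ S.card * (-1) ^ T.card) * ((x : ℤ) - y) ^ T.card
        = ((-1 : ℤ) ^ S.card * (x : ℤ) ^ (G.k S - G.kcov S)) *
            ((x : ℤ) ^ (G.kcov S - T.card) *
              ((-1 : ℤ) ^ T.card * ((x : ℤ) - y) ^ T.card)) := by ring
      _ = _ := by rw [hneg]
  rw [Finset.sum_congr rfl (fun T _ => hterm T), ← Finset.mul_sum]
  have hprod := Finset.prod_add (fun _ : G.CC S => ((y : ℤ) - x)) (fun _ => (x : ℤ))
    Finset.univ
  rw [Finset.prod_const, Finset.powerset_univ] at hprod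
  have hy : ((y : ℤ) - x + x) = y := by ring
  rw [hy, Finset.card_univ, ← hcS] at hprod
  have hsum : ∑ T : Finset (G.CC S),
      (x : ℤ) ^ (G.kcov S - T.card) * ((y : ℤ) - x) ^ T.card = (y : ℤ) ^ G.kcov S := by
    rw [hprod]
    refine Finset.sum_congr rfl (fun T _ => ?_)
    rw [Finset.prod_const, Finset.prod_const, Finset.card_sdiff_of_subset (Finset.subset_univ T),
      Finset.card_univ, ← hcS, mul_comm]
  rw [hsum]

end Multigraph
namespace Multigraph

lemma xi_eval (G : Multigraph) (x y : ℕ) :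
    G.xi (x : ℤ) (-1) ((x : ℤ) - (y : ℤ)) =
      ∑ S : Finset G.E, ∑ B : Finset G.E, (if B ⊆ S ∧ G.CovDisjoint (S \ B) B then
        (x : ℤ) ^ (G.k S - G.kcov B) * (-1) ^ (S.card - G.kcov B) *
          ((x : ℤ) - (y : ℤ)) ^ G.kcov B else 0) := by
  classical
  rw [xi]
  rw [← Finset.sum_product']
  conv_rhs => rw [← Finset.sum_product']
  rw [← Finset.sum_filter, ← Finset.sum_filter]
  refine Finset.sum_nbij' (fun p => (p.1 ∪ p.2, p.2)) (fun q => (q.1 \ q.2, q.2))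
    ?_ ?_ ?_ ?_ ?_
  · intro p hp
    rw [Finset.mem_filter] at hp
    refine Finset.mem_filter.mpr ⟨by simp, Finset.subset_union_right, ?_⟩
    refine G.covDisjoint_mono ?_ hp.2
    intro a ha
    rw [Finset.mem_sdiff, Finset.mem_union] at ha
    tauto
  · intro q hq
    rw [Finset.mem_filter] at hq
    exact Finset.mem_filter.mpr ⟨by simp, hq.2.2⟩
  · intro p hp
    rw [Finset.mem_filter] at hp
    have hd := G.covDisjoint_disjoint hp.2
    show ((p.1 ∪ p.2) \ p.2, p.2) = p
    rw [Finset.union_sdiff_cancel_right hd]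
  · intro q hq
    rw [Finset.mem_filter] at hq
    show (q.1 \ q.2 ∪ q.2, q.2) = q
    rw [Finset.sdiff_union_of_subset hq.2.1]
  · intro p hp
    rw [Finset.mem_filter] at hp
    have hd := G.covDisjoint_disjoint hp.2
    show _ = (x : ℤ) ^ (G.k (p.1 ∪ p.2) - G.kcov p.2) *
        (-1) ^ ((p.1 ∪ p.2).card - G.kcov p.2) * ((x : ℤ) - (y : ℤ)) ^ G.kcov p.2
    rw [Finset.card_union_of_disjoint hd]

end Multigraph

open Multigraph in
/-- For integers `x ≥ y ≥ 0` the bivariate chromatic polynomial of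
Dohmen, Pönitz and Tittmann is the substitution instance `P(G,x,y) = ξ(G, x, −1, x−y)`
of the edge elimination polynomial. -/
theorem chromP_eq_xi (G : Multigraph) (x y : ℕ) (hxy : y ≤ x) :
    (G.chromP x y : ℤ) = G.xi (x : ℤ) (-1) ((x : ℤ) - (y : ℤ)) := by
  rw [Multigraph.chromP_eq_sum G x y hxy, Multigraph.xi_eval G x y]
  exact Finset.sum_congr rfl (fun S _ => (Multigraph.inner_sum G S x y hxy).symm)
end

section
/- Let G = (V, E) be a finite multigraph, regarded as edge-labeled with each edge its own label, and work in the field ℚ(ω, (u_e)_{e∈E}) of rational functions. Then the chain polynomial Ch(G, ω, ū) = Σ_{S ⊆ E} (1−ω)^{|S| − r(S)} Π_{e ∈ E∖S} u_e, where r(S) = |V| − k(S), satisfies (1−ω)^{|V|} · Ch(G, ω, ū) = (Π_{e ∈ E} u_e) · ξ_lab(G, 1−ω, 1, 0, v̄), where v_e = (1−ω)/u_e for each e ∈ E. -/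
/-- The labeled edge elimination polynomial for a labeling `c : E → Λ`, evaluated at
`x y z` and weights `t : Λ → R`:
`ξ_lab = Σ_{(A ⊔ B) ⊆ E} (Π_{e ∈ A∪B} t_{c(e)}) x^{k(A∪B)-k_cov(B)} y^{|A|+|B|-k_cov(B)} z^{k_cov(B)}`. -/
noncomputable def Multigraph.xiLab {R : Type*} [CommRing R] (G : Multigraph)
    {Λ : Type*} (c : G.E → Λ) (x y z : R) (t : Λ → R) : R :=
  ∑ A : Finset G.E, ∑ B : Finset G.E,
    if G.CovDisjoint A B then
      (∏ e ∈ A ∪ B, t (c e)) *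
        (x ^ (G.k (A ∪ B) - G.kcov B) * y ^ (A.card + B.card - G.kcov B) * z ^ G.kcov B)
    else 0

open MvPolynomial

/-- The field `ℚ(ω, (u_e)_{e∈E})` of rational functions. -/
noncomputable abbrev ChainField (G : Multigraph) : Type :=
  FractionRing (MvPolynomial (Option G.E) ℚ)

/-- The rational function `ω`. -/
noncomputable def chainW (G : Multigraph) : ChainField G :=
  algebraMap (MvPolynomial (Option G.E) ℚ) _ (X none)

/-- The rational function `u_e`. -/
noncomputable def chainU (G : Multigraph) (e : G.E) : ChainField G :=
  algebraMap (MvPolynomial (Option G.E) ℚ) _ (X (some e))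

/-- The rank `r(S) = |V| − k(S)` (as an integer). -/
noncomputable def Multigraph.rk (G : Multigraph) (S : Finset G.E) : ℤ :=
  (Fintype.card G.V : ℤ) - (G.k S : ℤ)

/-- The chain polynomial `Ch(G,ω,ū) = Σ_{S⊆E} (1−ω)^{|S|−r(S)} Π_{e∈E∖S} u_e`. -/
noncomputable def Multigraph.chainPoly (G : Multigraph) : ChainField G :=
  ∑ S : Finset G.E,
    (1 - chainW G) ^ ((S.card : ℤ) - G.rk S) * ∏ e ∈ Sᶜ, chainU G e

lemma one_sub_chainW_ne_zero (G : Multigraph) : (1 : ChainField G) - chainW G ≠ 0 := by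
  have h : (1 : MvPolynomial (Option G.E) ℚ) - X none ≠ 0 := by
    intro h
    have := congrArg constantCoeff h
    simp at this
  have heq : (1 : ChainField G) - chainW G =
      algebraMap (MvPolynomial (Option G.E) ℚ) _ (1 - X none) := by
    simp [chainW]
  rw [heq]
  intro hz
  exact h (IsFractionRing.injective (MvPolynomial (Option G.E) ℚ) (ChainField G)
    (by simpa using hz))

lemma chainU_ne_zero (G : Multigraph) (e : G.E) : chainU G e ≠ 0 := by
  intro hz
  have := IsFractionRing.injective (MvPolynomial (Option G.E) ℚ) (ChainField G)
    (show algebraMap (MvPolynomial (Option G.E) ℚ) (ChainField G) (X (some e)) =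
      algebraMap _ _ 0 by simpa [chainU] using hz)
  exact MvPolynomial.X_ne_zero _ this

lemma Multigraph.kcov_empty (G : Multigraph) : G.kcov (∅ : Finset G.E) = 0 := by
  unfold Multigraph.kcov
  haveI : IsEmpty {w : G.V // ∃ e ∈ (∅ : Finset G.E), w ∈ G.ends e} :=
    ⟨fun ⟨_, e, he, _⟩ => by simp at he⟩
  haveI : IsEmpty (Quot (fun u v : {w : G.V // ∃ e ∈ (∅ : Finset G.E), w ∈ G.ends e} =>
      ∃ e ∈ (∅ : Finset G.E), G.ends e = s(u.val, v.val))) :=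
    ⟨fun q => by obtain ⟨a, -⟩ := Quot.exists_rep q; exact IsEmpty.false a⟩
  exact Nat.card_of_isEmpty

lemma Multigraph.kcov_ne_zero (G : Multigraph) {B : Finset G.E} (hB : B.Nonempty) :
    G.kcov B ≠ 0 := by
  obtain ⟨e, he⟩ := hB
  obtain ⟨⟨x, y⟩, hxy⟩ := (G.ends e).exists_rep
  have hx : x ∈ G.ends e := by
    rw [← hxy]; exact Sym2.mem_mk_left x y
  unfold Multigraph.kcov
  haveI : Nonempty {w : G.V // ∃ e ∈ B, w ∈ G.ends e} := ⟨⟨x, e, he, hx⟩⟩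
  haveI : Nonempty (Quot (fun u v : {w : G.V // ∃ e ∈ B, w ∈ G.ends e} =>
      ∃ e ∈ B, G.ends e = s(u.val, v.val))) := ⟨Quot.mk _ (Classical.arbitrary _)⟩
  exact Nat.card_pos.ne'

open Multigraph in
/-- In `ℚ(ω, (u_e)_{e∈E})`, regarding every edge as its own label:
`(1−ω)^{|V|} · Ch(G,ω,ū) = (Π_{e∈E} u_e) · ξ_lab(G, 1−ω, 1, 0, v̄)` with
`v_e = (1−ω)/u_e`. -/
theorem chain_eq_xiLab (G : Multigraph) :
    (1 - chainW G) ^ (Fintype.card G.V) * G.chainPoly =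
      (∏ e : G.E, chainU G e) *
        G.xiLab (fun e => e) (1 - chainW G) 1 0 (fun e => (1 - chainW G) / chainU G e) := by
  have hω := one_sub_chainW_ne_zero G
  have hu := chainU_ne_zero G
  have hB : ∀ A : Finset G.E,
      (∑ B : Finset G.E, if G.CovDisjoint A B then
        (∏ e ∈ A ∪ B, ((1 - chainW G) / chainU G e)) *
          ((1 - chainW G) ^ (G.k (A ∪ B) - G.kcov B) *
            (1 : ChainField G) ^ (A.card + B.card - G.kcov B) *
            (0 : ChainField G) ^ G.kcov B)
      else 0) =
      (∏ e ∈ A, ((1 - chainW G) / chainU G e)) * (1 - chainW G) ^ G.k A := by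
    intro A
    rw [Fintype.sum_eq_single (∅ : Finset G.E)]
    · have hd : G.CovDisjoint A ∅ := by
        intro v _ ⟨e, he, _⟩
        simp at he
      rw [if_pos hd]
      simp [Multigraph.kcov_empty]
    · intro B hBne
      have h0 : (0 : ChainField G) ^ G.kcov B = 0 :=
        zero_pow (G.kcov_ne_zero (Finset.nonempty_iff_ne_empty.mpr hBne))
      rw [h0]
      simp
  rw [Multigraph.chainPoly, Multigraph.xiLab, Finset.mul_sum, Finset.mul_sum]
  apply Finset.sum_congr rfl
  intro A _
  rw [hB A]
  have hprod : (∏ e : G.E, chainU G e) * (∏ e ∈ A, ((1 - chainW G) / chainU G e)) =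
      (1 - chainW G) ^ A.card * ∏ e ∈ Aᶜ, chainU G e := by
    rw [← Finset.prod_mul_prod_compl A (chainU G), mul_assoc, mul_comm (∏ e ∈ Aᶜ, chainU G e),
      ← mul_assoc, ← Finset.prod_mul_distrib]
    congr 1
    rw [← Finset.prod_const]
    apply Finset.prod_congr rfl
    intro e _
    rw [mul_comm, div_mul_cancel₀ _ (hu e)]
  have hpow : (1 - chainW G) ^ (Fintype.card G.V) *
      (1 - chainW G) ^ ((A.card : ℤ) - G.rk A) =
      (1 - chainW G) ^ A.card * (1 - chainW G) ^ G.k A := by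
    rw [← zpow_natCast (1 - chainW G) (Fintype.card G.V), ← zpow_add₀ hω,
      ← pow_add, ← zpow_natCast (1 - chainW G) (A.card + G.k A)]
    congr 1
    rw [Multigraph.rk]
    push_cast
    ring
  calc (1 - chainW G) ^ (Fintype.card G.V) *
        ((1 - chainW G) ^ ((A.card : ℤ) - G.rk A) * ∏ e ∈ Aᶜ, chainU G e)
      = ((1 - chainW G) ^ (Fintype.card G.V) *
          (1 - chainW G) ^ ((A.card : ℤ) - G.rk A)) * ∏ e ∈ Aᶜ, chainU G e := by ring
    _ = ((1 - chainW G) ^ A.card * ∏ e ∈ Aᶜ, chainU G e) * (1 - chainW G) ^ G.k A := by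
        rw [hpow]; ring
    _ = ((∏ e : G.E, chainU G e) * (∏ e ∈ A, ((1 - chainW G) / chainU G e))) *
          (1 - chainW G) ^ G.k A := by rw [hprod]
    _ = (∏ e : G.E, chainU G e) *
          ((∏ e ∈ A, ((1 - chainW G) / chainU G e)) * (1 - chainW G) ^ G.k A) := by ring
end
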